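/- arXiv:2506.07084 — 3 statements merged into one kernel-verified Lean document; each statement's English description precedes it below -/
import Mathlib

section
/- Let k > 0 and M > 3, and let δ > 0 satisfy M·δ < k. Let z = a + ib ∈ ℂ with |b| < δ and |a| < k − (M−1)·δ. Then |k² − z²| ≥ (|a| + k)·(M−1)·δ and Re(k² − z²) > 0. -/
/-! For `z = a + ib` one has `Re (k² - z²) = k² - a² + b² ≥ (k - |a|)(k + |a|)`, and the hypothesis
on `a` says `k - |a| > (M - 1) δ`. The modulus dominates the real part. -/

theorem Complex.re_ofReal_sq_sub_sq (k : ℝ) (z : ℂ) :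
    ((k : ℂ) ^ 2 - z ^ 2).re = k ^ 2 - z.re ^ 2 + z.im ^ 2 := by
  simp only [Complex.sub_re, pow_two, Complex.mul_re, Complex.ofReal_re, Complex.ofReal_im]
  ring

theorem mul_le_sq_sub_sq_of_abs_add_le {a k c : ℝ} (hc : 0 ≤ c) (h : |a| + c ≤ k) :
    (|a| + k) * c ≤ k ^ 2 - a ^ 2 := by
  have hgap : c ≤ k - |a| := by linarith
  calc (|a| + k) * c ≤ (|a| + k) * (k - |a|) :=
        mul_le_mul_of_nonneg_left hgap (by linarith [abs_nonneg a])
    _ = k ^ 2 - a ^ 2 := by rw [← sq_abs a]; ring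

theorem stmt_1_general (k M δ : ℝ) (z : ℂ) (hM : 3 < M) (hδ : 0 < δ)
    (ha : |z.re| < k - (M - 1) * δ) :
    (|z.re| + k) * (M - 1) * δ ≤ ‖(k : ℂ) ^ 2 - z ^ 2‖ ∧
      0 < (((k : ℂ) ^ 2 - z ^ 2)).re := by
  have hc : 0 < (M - 1) * δ := mul_pos (by linarith) hδ
  have hbound : (|z.re| + k) * ((M - 1) * δ) ≤ ((k : ℂ) ^ 2 - z ^ 2).re := by
    rw [Complex.re_ofReal_sq_sub_sq]
    linarith [mul_le_sq_sub_sq_of_abs_add_le hc.le (by linarith : |z.re| + (M - 1) * δ ≤ k),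
      sq_nonneg z.im]
  have hfactor : 0 < |z.re| + k := by linarith [abs_nonneg z.re]
  rw [mul_assoc]
  exact ⟨hbound.trans (Complex.re_le_norm _), (mul_pos hfactor hc).trans_le hbound⟩

/-- Case (1) of the PML decay lemma. -/
theorem stmt_1 (k M δ : ℝ) (z : ℂ) (hk : 0 < k) (hM : 3 < M) (hδ : 0 < δ)
    (hMδ : M * δ < k) (hb : |z.im| < δ) (ha : |z.re| < k - (M - 1) * δ) :
    (|z.re| + k) * (M - 1) * δ ≤ ‖(k : ℂ) ^ 2 - z ^ 2‖ ∧
      0 < (((k : ℂ) ^ 2 - z ^ 2)).re :=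
  stmt_1_general k M δ z hM hδ ha
end

section
/- Let k > 0 and M > 3, and let δ > 0 satisfy M·δ < k. Let z = a + ib ∈ ℂ with |b| < δ and |a| > k + (M−1)·δ. Then |a| + k > (3M−1)·δ, and |z² − k²| ≥ (|a| + k)·((M−1) − 1/(3M−1))·δ, and Re(k² − z²) < 0. -/
/-!
Writing `z = a + ib`, the real part of `z² - k²` is `(|a| - k)(|a| + k) - b²`. The first factor
exceeds `(M - 1)δ`, and the lower bound `|a| + k > (3M - 1)δ` lets the error `b² < δ²` be absorbed
as `δ² < (|a| + k) δ / (3M - 1)`. The norm dominates the real part, and the resulting bound is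
positive, which gives the sign of `Re (k² - z²)`.
-/

lemma Complex.re_sq_sub_ofReal_sq (z : ℂ) (k : ℝ) :
    (z ^ 2 - (k : ℂ) ^ 2).re = z.re ^ 2 - z.im ^ 2 - k ^ 2 := by
  simp [pow_two, Complex.mul_re]

section CutOff

variable {a b k M δ : ℝ}

lemma three_mul_sub_one_mul_lt_abs_add (hMδ : M * δ < k) (ha : k + (M - 1) * δ < |a|) :
    (3 * M - 1) * δ < |a| + k := by
  linarith

lemma mul_lt_sq_sub_sq_sub_sq (hM : 1 / 3 < M) (hMδ : M * δ < k) (hb : |b| < δ)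
    (ha : k + (M - 1) * δ < |a|) :
    (|a| + k) * ((M - 1) - 1 / (3 * M - 1)) * δ < a ^ 2 - b ^ 2 - k ^ 2 := by
  have hδ : 0 < δ := (abs_nonneg b).trans_lt hb
  have h3M : 0 < 3 * M - 1 := by linarith
  have hsum : 0 < |a| + k := (mul_pos h3M hδ).trans (three_mul_sub_one_mul_lt_abs_add hMδ ha)
  have hdiff : (M - 1) * δ < |a| - k := by linarith
  have hδ_lt : δ < (|a| + k) / (3 * M - 1) := by
    rw [lt_div_iff₀ h3M, mul_comm]
    exact three_mul_sub_one_mul_lt_abs_add hMδ ha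
  have hb2 : b ^ 2 < δ ^ 2 := by
    rw [← sq_abs b]
    exact pow_lt_pow_left₀ hb (abs_nonneg b) two_ne_zero
  calc (|a| + k) * ((M - 1) - 1 / (3 * M - 1)) * δ
        = (M - 1) * δ * (|a| + k) - (|a| + k) / (3 * M - 1) * δ := by ring
    _ < (|a| - k) * (|a| + k) - δ * δ := by
        linarith [mul_lt_mul_of_pos_right hdiff hsum, mul_lt_mul_of_pos_right hδ_lt hδ]
    _ < a ^ 2 - b ^ 2 - k ^ 2 := by linarith [sq_abs a]

end CutOff

theorem stmt_2_general (k M δ : ℝ) (z : ℂ) (hM : 3 < M)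
    (hMδ : M * δ < k) (hb : |z.im| < δ) (ha : k + (M - 1) * δ < |z.re|) :
    (3 * M - 1) * δ < |z.re| + k ∧
    (|z.re| + k) * ((M - 1) - 1 / (3 * M - 1)) * δ ≤ ‖z ^ 2 - (k : ℂ) ^ 2‖ ∧
    (((k : ℂ) ^ 2 - z ^ 2)).re < 0 := by
  have hsum := three_mul_sub_one_mul_lt_abs_add hMδ ha
  have hbound := mul_lt_sq_sub_sq_sub_sq (by linarith) hMδ hb ha
  rw [← Complex.re_sq_sub_ofReal_sq] at hbound
  have hδ : 0 < δ := (abs_nonneg _).trans_lt hb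
  have hcoef : 0 < (M - 1) - 1 / (3 * M - 1) := by
    have : 1 / (3 * M - 1) < 1 := by rw [div_lt_one (by linarith)]; linarith
    linarith
  have hpos : 0 < (|z.re| + k) * ((M - 1) - 1 / (3 * M - 1)) * δ :=
    mul_pos (mul_pos ((mul_pos (by linarith) hδ).trans hsum) hcoef) hδ
  refine ⟨hsum, hbound.le.trans (Complex.re_le_norm _), ?_⟩
  rw [← neg_sub, Complex.neg_re]
  linarith

/-- Case (2) of the PML decay lemma. -/
theorem stmt_2 (k M δ : ℝ) (z : ℂ) (hk : 0 < k) (hM : 3 < M) (hδ : 0 < δ)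
    (hMδ : M * δ < k) (hb : |z.im| < δ) (ha : k + (M - 1) * δ < |z.re|) :
    (3 * M - 1) * δ < |z.re| + k ∧
    (|z.re| + k) * ((M - 1) - 1 / (3 * M - 1)) * δ ≤ ‖z ^ 2 - (k : ℂ) ^ 2‖ ∧
    (((k : ℂ) ^ 2 - z ^ 2)).re < 0 :=
  stmt_2_general k M δ z hM hMδ hb ha
end

section
/- Let k > 0, M > 3, δ > 0 with M·δ < k, and let z = a + ib with |b| < δ and |a| < k − (M−1)·δ. Writing k² − z² = r·e^{2iθ} with r > 0 and 2θ = arg(k² − z²) ∈ (−π/2, π/2), one has |tan(2θ)| = |2ab / (k² − a² + b²)| < 1/(M−1). -/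
/-- with `k² − z² = r e^{2iθ}`, `2θ = arg(k² − z²)`, one has
`|tan 2θ| = |2ab/(k² − a² + b²)| < 1/(M−1)`. -/
theorem stmt_3 (k M δ a b : ℝ) (hk : 0 < k) (hM : 3 < M) (hδ : 0 < δ)
    (hMδ : M * δ < k) (hb : |b| < δ) (ha : |a| < k - (M - 1) * δ) :
    |Real.tan (Complex.arg ((k : ℂ) ^ 2 - (Complex.mk a b) ^ 2))|
        = |2 * a * b / (k ^ 2 - a ^ 2 + b ^ 2)| ∧
      |2 * a * b / (k ^ 2 - a ^ 2 + b ^ 2)| < 1 / (M - 1) := by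
  have hA : 0 ≤ |a| := abs_nonneg a
  have hApos : 0 < k - (M - 1) * δ := lt_of_le_of_lt hA ha
  have hab : |a| * |b| < (k - (M - 1) * δ) * δ :=
    mul_lt_mul'' ha hb hA (abs_nonneg b)
  have hM1 : 0 < M - 1 := by linarith
  have ha2 : a ^ 2 < (k - (M - 1) * δ) ^ 2 := by
    have := sq_lt_sq' (neg_lt_of_abs_lt ha) (lt_of_abs_lt ha)
    simpa using this
  have hre : 0 < k ^ 2 - a ^ 2 + b ^ 2 := by nlinarith [sq_nonneg b, mul_pos hM1 hδ, mul_pos hδ hk]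
  have hkey : (M - 1) * |2 * a * b| < k ^ 2 - a ^ 2 + b ^ 2 := by
    have h2 : |2 * a * b| = 2 * (|a| * |b|) := by
      rw [abs_mul, abs_mul]; simp [mul_assoc]
    rw [h2]
    nlinarith [sq_nonneg b, sq_nonneg ((M - 1) * δ)]
  constructor
  · rw [Complex.tan_arg]
    have hz : Complex.mk a b = (a : ℂ) + b * Complex.I := Complex.mk_eq_add_mul_I a b
    have hre' : ((k : ℂ) ^ 2 - (Complex.mk a b) ^ 2).re = k ^ 2 - a ^ 2 + b ^ 2 := by
      simp [hz, pow_two, Complex.sub_re, Complex.mul_re, Complex.add_re, Complex.add_im,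
        Complex.mul_im]; ring
    have him : ((k : ℂ) ^ 2 - (Complex.mk a b) ^ 2).im = -(2 * a * b) := by
      simp [hz, pow_two, Complex.sub_im, Complex.mul_im, Complex.add_re, Complex.add_im,
        Complex.mul_re]; ring
    rw [hre', him, abs_div, abs_div, abs_neg]
  · rw [abs_div, abs_of_pos hre, div_lt_div_iff₀ hre hM1, one_mul]
    linarith [hkey]
end
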